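/- arXiv:2511.16880 — 4 statements merged into one kernel-verified Lean document; each statement's English description precedes it below -/
import Mathlib

section
/- There is a one-to-one correspondence between functions F in the class 𝓗 and pairs (ε, G) ∈ {-1,1} × 𝓖, given by ε(F) = ε and log F(e^x, e^y) = max(x,y)·1_{ε=1} + min(x,y)·1_{ε=-1} + ε·G(x−y) for all x,y ∈ ℝ. -/
open MeasureTheory Filter Set Real
open scoped Classical

/-- The class 𝓗₊. -/
def HPlus (F : ℝ → ℝ → ℝ) : Prop :=
  ContinuousOn (fun p : ℝ × ℝ => F p.1 p.2) {p | 0 < p.1 ∧ 0 < p.2} ∧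
  (∀ x y, 0 < x → 0 < y → 0 < F x y) ∧
  (∀ x x' y y', 0 < x → 0 < y → x ≤ x' → y ≤ y' → F x y ≤ F x' y') ∧
  (∀ a x y, 0 < a → 0 < x → 0 < y → F (a * x) (a * y) = a * F x y) ∧
  (∀ x y, 0 < x → 0 < y → max x y ≤ F x y) ∧
  (∀ y, 0 < y →
    Tendsto (fun x => F x y) (nhdsWithin 0 (Set.Ioi 0)) (nhds y) ∧
    Tendsto (fun x => F y x) (nhdsWithin 0 (Set.Ioi 0)) (nhds y))

/-- The class 𝓗₋. -/
def HMinus (F : ℝ → ℝ → ℝ) : Prop :=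
  ContinuousOn (fun p : ℝ × ℝ => F p.1 p.2) {p | 0 < p.1 ∧ 0 < p.2} ∧
  (∀ x y, 0 < x → 0 < y → 0 < F x y) ∧
  (∀ x x' y y', 0 < x → 0 < y → x ≤ x' → y ≤ y' → F x y ≤ F x' y') ∧
  (∀ a x y, 0 < a → 0 < x → 0 < y → F (a * x) (a * y) = a * F x y) ∧
  (∀ x y, 0 < x → 0 < y → F x y ≤ min x y) ∧
  (∀ y, 0 < y →
    Tendsto (fun x => F x y) atTop (nhds y) ∧
    Tendsto (fun x => F y x) atTop (nhds y))

/-- The associated element F* of 𝓗₊. -/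
noncomputable def Fstar (F : ℝ → ℝ → ℝ) : ℝ → ℝ → ℝ :=
  if HPlus F then F else fun x y => (F x⁻¹ y⁻¹)⁻¹

/-- T_F(t) := sup { z : F*(e^{-t}, e^{-z}) ≥ 1 }. -/
noncomputable def TF (F : ℝ → ℝ → ℝ) (t : ℝ) : ℝ :=
  sSup {z : ℝ | 1 ≤ Fstar F (Real.exp (-t)) (Real.exp (-z))}

/-- T_F^-(t) := inf { z : F*(e^{-t}, e^{-z}) ≤ 1 }. -/
noncomputable def TFminus (F : ℝ → ℝ → ℝ) (t : ℝ) : ℝ :=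
  sInf {z : ℝ | Fstar F (Real.exp (-t)) (Real.exp (-z)) ≤ 1}

/-- r_F := log F*(1,1). -/
noncomputable def rF (F : ℝ → ℝ → ℝ) : ℝ := Real.log (Fstar F 1 1)

/-- Γ_F^{(a,b)} := ∫₀^∞ t^a (T_F(t))^b dt, as an extended nonnegative real. -/
noncomputable def Gamma (F : ℝ → ℝ → ℝ) (a b : ℝ) : ENNReal :=
  ∫⁻ t in Set.Ioi (0 : ℝ), ENNReal.ofReal (t ^ a * (TF F t) ^ b)

/-- F^#(x,y) := F(y,x). -/
def Fsharp (F : ℝ → ℝ → ℝ) : ℝ → ℝ → ℝ := fun x y => F y x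

/-- The class 𝓖. -/
def GClass (G : ℝ → ℝ) : Prop :=
  Continuous G ∧ (∀ z, 0 ≤ G z) ∧
  (∀ z w, 0 ≤ z → z ≤ w → G w ≤ G z ∧ G z - G w ≤ w - z) ∧
  (∀ z w, w ≤ z → z ≤ 0 → G w ≤ G z ∧ G z - G w ≤ z - w) ∧
  Tendsto G atTop (nhds 0) ∧ Tendsto G atBot (nhds 0)

/-! By 1-homogeneity, `log F (exp x) (exp y) = y + h (x - y)` with `h z = log F (exp z) 1`, so `F`
is recovered from the one-variable profile `h` as `F x y = exp (log y + h (log x - log y))`.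
Monotonicity of `F` in its two arguments says exactly that `h` is nondecreasing and `h z - z` is
nonincreasing, which for `G = h - max z 0` (resp. `G = min z 0 - h`) are the monotonicity and
1-Lipschitz conditions of `𝓖`. The bound `F ≥ max` (resp. `F ≤ min`) is `G ≥ 0`, and the limits
of `F` at the boundary are the limits of `G` at `±∞`. -/

lemma monotone_add_max_and_antitone_add_max_neg_iff {G : ℝ → ℝ} :
    ((Monotone fun z => G z + max z 0) ∧ Antitone fun z => G z + max (-z) 0) ↔
      (∀ z w, 0 ≤ z → z ≤ w → G w ≤ G z ∧ G z - G w ≤ w - z) ∧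
      (∀ z w, w ≤ z → z ≤ 0 → G w ≤ G z ∧ G z - G w ≤ z - w) := by
  refine ⟨fun ⟨hmono, hanti⟩ => ⟨fun z w hz hzw => ?_, fun z w hwz hz => ?_⟩,
    fun ⟨hpos, hneg⟩ => ⟨?_, ?_⟩⟩
  · have h1 := hmono hzw
    have h2 := hanti hzw
    simp only [max_eq_left hz, max_eq_left (hz.trans hzw), max_eq_right (neg_nonpos.2 hz),
      max_eq_right (neg_nonpos.2 (hz.trans hzw))] at h1 h2
    constructor <;> linarith
  · have h1 := hmono hwz
    have h2 := hanti hwz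
    simp only [max_eq_right hz, max_eq_right (hwz.trans hz), max_eq_left (neg_nonneg.2 hz),
      max_eq_left (neg_nonneg.2 (hwz.trans hz))] at h1 h2
    constructor <;> linarith
  · refine MonotoneOn.Iic_union_Ici (a := 0) (fun z hz w hw hzw => ?_)
      (fun z hz w hw hzw => ?_)
    · have := (hneg w z hzw hw).1
      simp only [max_eq_right (mem_Iic.1 hz), max_eq_right (mem_Iic.1 hw)]
      linarith
    · have := (hpos z w hz hzw).2
      simp only [max_eq_left (mem_Ici.1 hz), max_eq_left (mem_Ici.1 hw)]
      linarith
  · refine AntitoneOn.Iic_union_Ici (a := 0) (fun z hz w hw hzw => ?_)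
      (fun z hz w hw hzw => ?_)
    · have := (hneg w z hzw hw).2
      simp only [max_eq_left (neg_nonneg.2 (mem_Iic.1 hz)),
        max_eq_left (neg_nonneg.2 (mem_Iic.1 hw))]
      linarith
    · have := (hpos z w hz hzw).1
      simp only [max_eq_right (neg_nonpos.2 (mem_Ici.1 hz)),
        max_eq_right (neg_nonpos.2 (mem_Ici.1 hw))]
      linarith

lemma gClass_iff {G : ℝ → ℝ} :
    GClass G ↔ Continuous G ∧ (∀ z, 0 ≤ G z) ∧ (Monotone fun z => G z + max z 0) ∧
      (Antitone fun z => G z + max (-z) 0) ∧ Tendsto G atTop (nhds 0) ∧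
      Tendsto G atBot (nhds 0) := by
  have := monotone_add_max_and_antitone_add_max_neg_iff (G := G)
  rw [GClass]
  tauto

lemma add_max_sub_zero (a b : ℝ) : b + max (a - b) 0 = max a b := by
  rw [add_comm, ← max_add_add_right, sub_add_cancel, zero_add]

lemma add_min_sub_zero (a b : ℝ) : b + min (a - b) 0 = min a b := by
  rw [add_comm, ← min_add_add_right, sub_add_cancel, zero_add]

noncomputable def logProfile (F : ℝ → ℝ → ℝ) (z : ℝ) : ℝ := log (F (exp z) 1)

section logProfile

variable {F : ℝ → ℝ → ℝ} (hpos : ∀ x y, 0 < x → 0 < y → 0 < F x y)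
  (hmono : ∀ x x' y y', 0 < x → 0 < y → x ≤ x' → y ≤ y' → F x y ≤ F x' y')
  (hhom : ∀ a x y, 0 < a → 0 < x → 0 < y → F (a * x) (a * y) = a * F x y)

include hpos hhom in
lemma log_apply_exp_exp (x y : ℝ) : log (F (exp x) (exp y)) = y + logProfile F (x - y) := by
  have := hhom (exp y) (exp (x - y)) 1 (exp_pos _) (exp_pos _) one_pos
  rw [← exp_add, add_sub_cancel, mul_one] at this
  rw [this, log_mul (exp_ne_zero _) (hpos _ _ (exp_pos _) one_pos).ne', log_exp, logProfile]

include hpos hhom in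
lemma logProfile_sub_self (z : ℝ) : logProfile F z - z = log (F 1 (exp (-z))) := by
  have := log_apply_exp_exp hpos hhom 0 (-z)
  rw [exp_zero, zero_sub, neg_neg] at this
  rw [this]
  ring

include hpos hmono in
lemma monotone_logProfile : Monotone (logProfile F) := fun _ _ h =>
  log_le_log (hpos _ _ (exp_pos _) one_pos)
    (hmono _ _ _ _ (exp_pos _) one_pos (exp_le_exp.2 h) le_rfl)

include hpos hmono hhom in
lemma antitone_logProfile_sub_self : Antitone fun z => logProfile F z - z := fun z w h => by
  simp only [logProfile_sub_self hpos hhom]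
  exact log_le_log (hpos _ _ one_pos (exp_pos _))
    (hmono _ _ _ _ one_pos (exp_pos _) le_rfl (exp_le_exp.2 (neg_le_neg h)))

include hpos in
lemma continuous_logProfile
    (hc : ContinuousOn (fun p : ℝ × ℝ => F p.1 p.2) {p | 0 < p.1 ∧ 0 < p.2}) :
    Continuous (logProfile F) :=
  continuousOn_univ.1 <| (hc.comp_continuous (continuous_exp.prodMk continuous_const)
    fun z => ⟨exp_pos z, one_pos⟩).continuousOn.log
      fun z _ => (hpos _ _ (exp_pos z) one_pos).ne'

include hpos in
lemma max_le_logProfile (hge : ∀ x y, 0 < x → 0 < y → max x y ≤ F x y) (z : ℝ) :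
    max z 0 ≤ logProfile F z := by
  rw [logProfile, le_log_iff_exp_le (hpos _ _ (exp_pos z) one_pos), exp_monotone.map_max,
    exp_zero]
  exact hge _ _ (exp_pos z) one_pos

include hpos in
lemma logProfile_le_min (hle : ∀ x y, 0 < x → 0 < y → F x y ≤ min x y) (z : ℝ) :
    logProfile F z ≤ min z 0 := by
  rw [logProfile, log_le_iff_le_exp (hpos _ _ (exp_pos z) one_pos), exp_monotone.map_min,
    exp_zero]
  exact hle _ _ (exp_pos z) one_pos

lemma tendsto_logProfile {l L : Filter ℝ} (hexp : Tendsto exp L l)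
    (hF : Tendsto (fun x => F x 1) l (nhds 1)) : Tendsto (logProfile F) L (nhds 0) := by
  show Tendsto (fun z => log (F (exp z) 1)) L (nhds 0)
  simpa using (hF.comp hexp).log one_ne_zero

include hpos hhom in
lemma tendsto_logProfile_sub_self {l L : Filter ℝ} (hexp : Tendsto (fun z => exp (-z)) L l)
    (hF : Tendsto (fun y => F 1 y) l (nhds 1)) :
    Tendsto (fun z => logProfile F z - z) L (nhds 0) := by
  simp only [logProfile_sub_self hpos hhom]
  simpa using (hF.comp hexp).log one_ne_zero

end logProfile

noncomputable def ofLogProfile (h : ℝ → ℝ) (x y : ℝ) : ℝ := exp (log y + h (log x - log y))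

section ofLogProfile

variable {h : ℝ → ℝ}

lemma log_ofLogProfile_exp_exp (x y : ℝ) :
    log (ofLogProfile h (exp x) (exp y)) = y + h (x - y) := by
  simp [ofLogProfile]

lemma ofLogProfile_pos (x y : ℝ) : 0 < ofLogProfile h x y := exp_pos _

lemma ofLogProfile_mul_mul {a x y : ℝ} (ha : 0 < a) (hx : 0 < x) (hy : 0 < y) :
    ofLogProfile h (a * x) (a * y) = a * ofLogProfile h x y := by
  simp only [ofLogProfile, log_mul ha.ne' hx.ne', log_mul ha.ne' hy.ne', add_sub_add_left_eq_sub,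
    add_assoc, exp_add, exp_log ha]

lemma ofLogProfile_le_ofLogProfile (hmono : Monotone h) (hanti : Antitone fun z => h z - z)
    {x x' y y' : ℝ} (hx : 0 < x) (hy : 0 < y) (hxx : x ≤ x') (hyy : y ≤ y') :
    ofLogProfile h x y ≤ ofLogProfile h x' y' := by
  have hlx := log_le_log hx hxx
  have hly := log_le_log hy hyy
  refine exp_le_exp.2 ?_
  calc log y + h (log x - log y) ≤ log y + h (log x' - log y) :=
        add_le_add_right (hmono (show log x - log y ≤ log x' - log y by linarith)) _
    _ = log x' + (h (log x' - log y) - (log x' - log y)) := by ring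
    _ ≤ log x' + (h (log x' - log y') - (log x' - log y')) :=
        add_le_add_right (hanti (show log x' - log y' ≤ log x' - log y by linarith)) _
    _ = log y' + h (log x' - log y') := by ring

lemma continuousOn_ofLogProfile (hc : Continuous h) :
    ContinuousOn (fun p : ℝ × ℝ => ofLogProfile h p.1 p.2) {p | 0 < p.1 ∧ 0 < p.2} := by
  have hlog1 : ContinuousOn (fun p : ℝ × ℝ => log p.1) {p | 0 < p.1 ∧ 0 < p.2} :=
    continuousOn_fst.log fun p hp => hp.1.ne'
  have hlog2 : ContinuousOn (fun p : ℝ × ℝ => log p.2) {p | 0 < p.1 ∧ 0 < p.2} :=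
    continuousOn_snd.log fun p hp => hp.2.ne'
  exact (hlog2.add (hc.comp_continuousOn (hlog1.sub hlog2))).rexp

lemma max_le_ofLogProfile (hge : ∀ z, max z 0 ≤ h z) {x y : ℝ} (hx : 0 < x) (hy : 0 < y) :
    max x y ≤ ofLogProfile h x y := by
  calc max x y = exp (log y + max (log x - log y) 0) := by
        rw [add_max_sub_zero, exp_monotone.map_max, exp_log hx, exp_log hy]
    _ ≤ ofLogProfile h x y := exp_le_exp.2 (add_le_add_right (hge _) _)

lemma ofLogProfile_le_min (hle : ∀ z, h z ≤ min z 0) {x y : ℝ} (hx : 0 < x) (hy : 0 < y) :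
    ofLogProfile h x y ≤ min x y := by
  calc ofLogProfile h x y ≤ exp (log y + min (log x - log y) 0) :=
        exp_le_exp.2 (add_le_add_right (hle _) _)
    _ = min x y := by rw [add_min_sub_zero, exp_monotone.map_min, exp_log hx, exp_log hy]

lemma tendsto_ofLogProfile_left {l L : Filter ℝ} {y : ℝ} (hy : 0 < y)
    (hh : Tendsto h L (nhds 0)) (hl : Tendsto (fun x => log x - log y) l L) :
    Tendsto (fun x => ofLogProfile h x y) l (nhds y) := by
  simpa [ofLogProfile, exp_log hy] using ((hh.comp hl).const_add (log y)).rexp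

lemma tendsto_ofLogProfile_right {l L : Filter ℝ} {y : ℝ} (hy : 0 < y)
    (hh : Tendsto (fun z => h z - z) L (nhds 0)) (hl : Tendsto (fun x => log y - log x) l L) :
    Tendsto (fun x => ofLogProfile h y x) l (nhds y) := by
  have key : ∀ x, ofLogProfile h y x = exp (log y + (h (log y - log x) - (log y - log x))) :=
    fun x => by rw [ofLogProfile]; ring_nf
  simpa [key, exp_log hy] using ((hh.comp hl).const_add (log y)).rexp

end ofLogProfile

lemma gClass_logProfile_sub_max {F : ℝ → ℝ → ℝ} (hF : HPlus F) :
    GClass fun z => logProfile F z - max z 0 := by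
  obtain ⟨hc, hpos, hmono, hhom, hge, hlim⟩ := hF
  refine gClass_iff.2 ⟨(continuous_logProfile hpos hc).sub (continuous_id.max continuous_const),
    fun z => sub_nonneg.2 (max_le_logProfile hpos hge z), ?_, ?_, ?_, ?_⟩
  · simpa using monotone_logProfile hpos hmono
  · intro a b hab
    have := antitone_logProfile_sub_self hpos hmono hhom hab
    dsimp only at this ⊢
    linarith [max_neg_zero a, max_neg_zero b]
  · refine (tendsto_logProfile_sub_self hpos hhom
      (tendsto_exp_atBot_nhdsGT.comp tendsto_neg_atTop_atBot) (hlim 1 one_pos).2).congr' ?_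
    filter_upwards [eventually_ge_atTop 0] with z hz
    rw [max_eq_left hz]
  · refine (tendsto_logProfile tendsto_exp_atBot_nhdsGT (hlim 1 one_pos).1).congr' ?_
    filter_upwards [eventually_le_atBot 0] with z hz
    rw [max_eq_right hz, sub_zero]

lemma gClass_min_sub_logProfile {F : ℝ → ℝ → ℝ} (hF : HMinus F) :
    GClass fun z => min z 0 - logProfile F z := by
  obtain ⟨hc, hpos, hmono, hhom, hle, hlim⟩ := hF
  refine gClass_iff.2 ⟨(continuous_id.min continuous_const).sub (continuous_logProfile hpos hc),
    fun z => sub_nonneg.2 (logProfile_le_min hpos hle z), ?_, ?_, ?_, ?_⟩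
  · intro a b hab
    have := antitone_logProfile_sub_self hpos hmono hhom hab
    dsimp only at this ⊢
    linarith [min_add_max a 0, min_add_max b 0]
  · intro a b hab
    have := monotone_logProfile hpos hmono hab
    dsimp only
    linarith [min_add_max a 0, min_add_max b 0, max_neg_zero a, max_neg_zero b]
  · refine Tendsto.congr' ?_
      (by simpa using (tendsto_logProfile tendsto_exp_atTop (hlim 1 one_pos).1).neg)
    filter_upwards [eventually_ge_atTop 0] with z hz
    simp [min_eq_right hz]
  · refine Tendsto.congr' ?_ (by simpa using (tendsto_logProfile_sub_self hpos hhom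
      (tendsto_exp_atTop.comp tendsto_neg_atBot_atTop) (hlim 1 one_pos).2).neg)
    filter_upwards [eventually_le_atBot 0] with z hz
    simp [min_eq_left hz]

lemma hPlus_ofLogProfile_add_max {G : ℝ → ℝ} (hG : GClass G) :
    HPlus (ofLogProfile fun z => G z + max z 0) := by
  obtain ⟨hc, hnn, hmono, hanti, htop, hbot⟩ := gClass_iff.1 hG
  have hanti' : Antitone fun z => G z + max z 0 - z := fun a b hab => by
    linarith [hanti hab, max_neg_zero a, max_neg_zero b]
  refine ⟨continuousOn_ofLogProfile (hc.add (continuous_id.max continuous_const)),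
    fun x y _ _ => ofLogProfile_pos x y,
    fun _ _ _ _ hx hy => ofLogProfile_le_ofLogProfile hmono hanti' hx hy,
    fun _ _ _ => ofLogProfile_mul_mul,
    fun _ _ => max_le_ofLogProfile fun z => le_add_of_nonneg_left (hnn z),
    fun y hy => ⟨tendsto_ofLogProfile_left (L := atBot) hy ?_ ?_,
      tendsto_ofLogProfile_right (L := atTop) hy ?_ ?_⟩⟩
  · refine hbot.congr' ?_
    filter_upwards [eventually_le_atBot 0] with z hz
    rw [max_eq_right hz, add_zero]
  · exact tendsto_atBot_add_const_right _ (-log y) tendsto_log_nhdsGT_zero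
  · refine htop.congr' ?_
    filter_upwards [eventually_ge_atTop 0] with z hz
    rw [max_eq_left hz, add_sub_cancel_right]
  · exact tendsto_atTop_add_const_left _ (log y)
      (tendsto_neg_atBot_atTop.comp tendsto_log_nhdsGT_zero)

lemma hMinus_ofLogProfile_min_sub {G : ℝ → ℝ} (hG : GClass G) :
    HMinus (ofLogProfile fun z => min z 0 - G z) := by
  obtain ⟨hc, hnn, hmono, hanti, htop, hbot⟩ := gClass_iff.1 hG
  have hmono' : Monotone fun z => min z 0 - G z := fun a b hab => by
    linarith [hanti hab, min_add_max a 0, min_add_max b 0, max_neg_zero a, max_neg_zero b]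
  have hanti' : Antitone fun z => min z 0 - G z - z := fun a b hab => by
    linarith [hmono hab, min_add_max a 0, min_add_max b 0]
  refine ⟨continuousOn_ofLogProfile ((continuous_id.min continuous_const).sub hc),
    fun x y _ _ => ofLogProfile_pos x y,
    fun _ _ _ _ hx hy => ofLogProfile_le_ofLogProfile hmono' hanti' hx hy,
    fun _ _ _ => ofLogProfile_mul_mul,
    fun _ _ => ofLogProfile_le_min fun z => sub_le_self _ (hnn z),
    fun y hy => ⟨tendsto_ofLogProfile_left (L := atTop) hy ?_ ?_,
      tendsto_ofLogProfile_right (L := atBot) hy ?_ ?_⟩⟩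
  · refine Tendsto.congr' ?_ (by simpa using htop.neg)
    filter_upwards [eventually_ge_atTop 0] with z hz
    simp [min_eq_right hz]
  · exact tendsto_atTop_add_const_right _ (-log y) tendsto_log_atTop
  · refine Tendsto.congr' ?_ (by simpa using hbot.neg)
    filter_upwards [eventually_le_atBot 0] with z hz
    simp [min_eq_left hz]
  · exact tendsto_atBot_add_const_left _ (log y)
      (tendsto_neg_atTop_atBot.comp tendsto_log_atTop)

lemma HPlus.not_hMinus {F : ℝ → ℝ → ℝ} (hP : HPlus F) : ¬ HMinus F := fun hM => by
  have h1 := hP.2.2.2.2.1 1 2 one_pos two_pos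
  have h2 := hM.2.2.2.2.1 1 2 one_pos two_pos
  norm_num at h1 h2
  linarith

lemma sign_unique {F : ℝ → ℝ → ℝ} {ε ε' : ℝ} (h : (ε = 1 ∧ HPlus F) ∨ (ε = -1 ∧ HMinus F))
    (h' : (ε' = 1 ∧ HPlus F) ∨ (ε' = -1 ∧ HMinus F)) : ε = ε' := by
  rcases h with ⟨rfl, hP⟩ | ⟨rfl, hM⟩ <;> rcases h' with ⟨rfl, hP'⟩ | ⟨rfl, hM'⟩
  exacts [rfl, (hP.not_hMinus hM').elim, (hP'.not_hMinus hM).elim, rfl]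

noncomputable def logForm (ε : ℝ) (G : ℝ → ℝ) (x y : ℝ) : ℝ :=
  (if ε = 1 then max x y else min x y) + ε * G (x - y)

lemma logForm_one (G : ℝ → ℝ) (x y : ℝ) :
    logForm 1 G x y = y + (G (x - y) + max (x - y) 0) := by
  rw [logForm, if_pos rfl, ← add_max_sub_zero]
  ring

lemma logForm_neg_one (G : ℝ → ℝ) (x y : ℝ) :
    logForm (-1) G x y = y + (min (x - y) 0 - G (x - y)) := by
  rw [logForm, if_neg (by norm_num), ← add_min_sub_zero]
  ring

lemma logForm_injective {ε : ℝ} (hε : ε ≠ 0) {G G' : ℝ → ℝ}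
    (h : ∀ x y, logForm ε G x y = logForm ε G' x y) : G = G' :=
  funext fun z => by simpa [logForm, hε] using h z 0

lemma eq_of_log_apply_exp_exp_eq {F F' : ℝ → ℝ → ℝ} (hF : ∀ x y, 0 < x → 0 < y → 0 < F x y)
    (hF' : ∀ x y, 0 < x → 0 < y → 0 < F' x y)
    (h : ∀ x y, log (F (exp x) (exp y)) = log (F' (exp x) (exp y))) {x y : ℝ} (hx : 0 < x)
    (hy : 0 < y) : F x y = F' x y := by
  have := h (log x) (log y)
  rw [exp_log hx, exp_log hy] at this
  exact log_injOn_pos (hF x y hx hy) (hF' x y hx hy) this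

lemma exists_logForm_of_hPlus_or_hMinus {F : ℝ → ℝ → ℝ} (hF : HPlus F ∨ HMinus F) :
    ∃ ε G, ((ε = 1 ∧ HPlus F) ∨ (ε = -1 ∧ HMinus F)) ∧ GClass G ∧
      ∀ x y, log (F (exp x) (exp y)) = logForm ε G x y := by
  rcases hF with hF | hF
  · refine ⟨1, _, .inl ⟨rfl, hF⟩, gClass_logProfile_sub_max hF, fun x y => ?_⟩
    rw [logForm_one, log_apply_exp_exp hF.2.1 hF.2.2.2.1]
    ring
  · refine ⟨-1, _, .inr ⟨rfl, hF⟩, gClass_min_sub_logProfile hF, fun x y => ?_⟩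
    rw [logForm_neg_one, log_apply_exp_exp hF.2.1 hF.2.2.2.1]
    ring

lemma exists_hPlus_or_hMinus_of_gClass {ε : ℝ} {G : ℝ → ℝ} (hε : ε = 1 ∨ ε = -1)
    (hG : GClass G) : ∃ F, ((ε = 1 ∧ HPlus F) ∨ (ε = -1 ∧ HMinus F)) ∧
      ∀ x y, log (F (exp x) (exp y)) = logForm ε G x y := by
  rcases hε with rfl | rfl
  · exact ⟨_, .inl ⟨rfl, hPlus_ofLogProfile_add_max hG⟩, fun x y => by
      rw [logForm_one, log_ofLogProfile_exp_exp]⟩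
  · exact ⟨_, .inr ⟨rfl, hMinus_ofLogProfile_min_sub hG⟩, fun x y => by
      rw [logForm_neg_one, log_ofLogProfile_exp_exp]⟩

/-- One-to-one correspondence between F ∈ 𝓗 and pairs (ε, G) ∈ {-1,1} × 𝓖 given by
ε(F) = ε and log F(e^x, e^y) = max(x,y)·1_{ε=1} + min(x,y)·1_{ε=-1} + ε·G(x−y). -/
theorem stmt0 :
    (∀ F : ℝ → ℝ → ℝ, HPlus F ∨ HMinus F →
      ∃! p : ℝ × (ℝ → ℝ),
        ((p.1 = 1 ∧ HPlus F) ∨ (p.1 = -1 ∧ HMinus F)) ∧ GClass p.2 ∧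
        (∀ x y : ℝ, Real.log (F (Real.exp x) (Real.exp y)) =
          (if p.1 = 1 then max x y else min x y) + p.1 * p.2 (x - y))) ∧
    (∀ (ε : ℝ) (G : ℝ → ℝ), (ε = 1 ∨ ε = -1) → GClass G →
      ∃ F : ℝ → ℝ → ℝ, (HPlus F ∨ HMinus F) ∧
        ((ε = 1 ∧ HPlus F) ∨ (ε = -1 ∧ HMinus F)) ∧
        (∀ x y : ℝ, Real.log (F (Real.exp x) (Real.exp y)) =
          (if ε = 1 then max x y else min x y) + ε * G (x - y)) ∧
        (∀ F' : ℝ → ℝ → ℝ, HPlus F' ∨ HMinus F' →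
          (∀ x y : ℝ, Real.log (F' (Real.exp x) (Real.exp y)) =
            (if ε = 1 then max x y else min x y) + ε * G (x - y)) →
          ∀ x y : ℝ, 0 < x → 0 < y → F' x y = F x y)) := by
  refine ⟨fun F hF => ?_, fun ε G hε hG => ?_⟩
  · obtain ⟨ε, G, hεF, hG, hrep⟩ := exists_logForm_of_hPlus_or_hMinus hF
    refine ⟨(ε, G), ⟨hεF, hG, hrep⟩, ?_⟩
    have hε : ε ≠ 0 := by rcases hεF with ⟨rfl, -⟩ | ⟨rfl, -⟩ <;> norm_num
    rintro ⟨ε', G'⟩ ⟨hε'F, -, hrep'⟩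
    obtain rfl : ε' = ε := sign_unique hε'F hεF
    exact Prod.ext rfl (logForm_injective hε fun x y => (hrep' x y).symm.trans (hrep x y))
  · obtain ⟨F, hFε, hrep⟩ := exists_hPlus_or_hMinus_of_gClass hε hG
    have hF : HPlus F ∨ HMinus F := hFε.imp And.right And.right
    refine ⟨F, hF, hFε, hrep, fun F' hF' hrep' x y hx hy => ?_⟩
    exact eq_of_log_apply_exp_exp_eq (hF'.elim (·.2.1) (·.2.1)) (hF.elim (·.2.1) (·.2.1))
      (fun x y => (hrep' x y).trans (hrep x y).symm) hx hy
end

section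
/- For F ∈ 𝓗₊ ∪ 𝓗₋ and all t, u > 0: T_F(t) < u if and only if T_{F^#}(u) < t, where F^#(x,y) := F(y,x). -/
open MeasureTheory Filter Set Real
open scoped Classical

/-!
Both classes reduce to 𝓗₊ through `F*`, and for `G = F* ∈ 𝓗₊` and `t > 0` the function
`z ↦ G(e^{-t}, e^{-z})` is continuous, nonincreasing, at least `1` at `z = 0` and tends to
`e^{-t} < 1`. Hence its superlevel set `{z | 1 ≤ G(e^{-t}, e^{-z})}` is the closed half-line
`(-∞, T_F(t)]`, and `T_F(t) < u` says exactly `F*(e^{-t}, e^{-u}) < 1`. The right-hand side of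
the equivalence unfolds to the same condition because `(F^#)* = (F*)^#`.
-/

variable {F : ℝ → ℝ → ℝ}

theorem HMinus.not_hPlus (hF : HMinus F) : ¬ HPlus F := by
  intro hP
  have hge : max 1 2 ≤ F 1 2 := hP.2.2.2.2.1 1 2 one_pos two_pos
  have hle : F 1 2 ≤ min 1 2 := hF.2.2.2.2.1 1 2 one_pos two_pos
  norm_num at hge hle
  linarith

theorem HPlus.sharp (hF : HPlus F) : HPlus (Fsharp F) := by
  obtain ⟨hc, hpos, hmono, hhom, hmax, hlim⟩ := hF
  exact ⟨hc.comp continuous_swap.continuousOn fun p hp => ⟨hp.2, hp.1⟩,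
    fun x y hx hy => hpos y x hy hx,
    fun x x' y y' hx hy hxx hyy => hmono y y' x x' hy hx hyy hxx,
    fun a x y ha hx hy => hhom a y x ha hy hx,
    fun x y hx hy => max_comm x y ▸ hmax y x hy hx,
    fun y hy => (hlim y hy).symm⟩

theorem hPlus_sharp_iff : HPlus (Fsharp F) ↔ HPlus F :=
  ⟨HPlus.sharp, HPlus.sharp⟩

theorem Fstar_sharp (F : ℝ → ℝ → ℝ) : Fstar (Fsharp F) = Fsharp (Fstar F) := by
  unfold Fstar
  by_cases h : HPlus F
  · rw [if_pos (hPlus_sharp_iff.mpr h), if_pos h]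
  · rw [if_neg (mt hPlus_sharp_iff.mp h), if_neg h]
    rfl

theorem min_inv_inv_eq_inv_max {α : Type*} [Field α] [LinearOrder α] [IsStrictOrderedRing α]
    {x y : α} (hx : 0 < x) (hy : 0 < y) :
    min x⁻¹ y⁻¹ = (max x y)⁻¹ := by
  rcases le_total x y with h | h
  · rw [max_eq_right h, min_eq_right (inv_anti₀ hx h)]
  · rw [max_eq_left h, min_eq_left (inv_anti₀ hy h)]

theorem HMinus.hPlus_inv (hF : HMinus F) : HPlus fun x y => (F x⁻¹ y⁻¹)⁻¹ := by
  obtain ⟨hc, hpos, hmono, hhom, hmin, hlim⟩ := hF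
  have hpos' : ∀ x y : ℝ, 0 < x → 0 < y → 0 < F x⁻¹ y⁻¹ := fun x y hx hy =>
    hpos _ _ (inv_pos.2 hx) (inv_pos.2 hy)
  refine ⟨?cont, fun x y hx hy => inv_pos.2 (hpos' x y hx hy), ?mono, ?hom, ?max, ?lim⟩
  case cont =>
    have hinv : ContinuousOn (fun p : ℝ × ℝ => (p.1⁻¹, p.2⁻¹)) {p | 0 < p.1 ∧ 0 < p.2} :=
      (continuousOn_fst.inv₀ fun p hp => hp.1.ne').prodMk
        (continuousOn_snd.inv₀ fun p hp => hp.2.ne')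
    exact (hc.comp hinv fun p hp => ⟨inv_pos.2 hp.1, inv_pos.2 hp.2⟩).inv₀
      fun p hp => (hpos' _ _ hp.1 hp.2).ne'
  case mono =>
    intro x x' y y' hx hy hxx hyy
    exact inv_anti₀ (hpos' _ _ (hx.trans_le hxx) (hy.trans_le hyy)) <|
      hmono _ _ _ _ (inv_pos.2 (hx.trans_le hxx)) (inv_pos.2 (hy.trans_le hyy))
        (inv_anti₀ hx hxx) (inv_anti₀ hy hyy)
  case hom =>
    intro a x y ha hx hy
    simp only [mul_inv]
    rw [hhom _ _ _ (inv_pos.2 ha) (inv_pos.2 hx) (inv_pos.2 hy), mul_inv, inv_inv]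
  case max =>
    intro x y hx hy
    have hle : F x⁻¹ y⁻¹ ≤ (max x y)⁻¹ :=
      min_inv_inv_eq_inv_max hx hy ▸ hmin _ _ (inv_pos.2 hx) (inv_pos.2 hy)
    simpa using inv_anti₀ (hpos' x y hx hy) hle
  case lim =>
    intro y hy
    have hy' : y⁻¹ ≠ 0 := inv_ne_zero hy.ne'
    obtain ⟨hleft, hright⟩ := hlim y⁻¹ (inv_pos.2 hy)
    constructor
    · simpa using ((hleft.comp tendsto_inv_nhdsGT_zero).inv₀ hy')
    · simpa using ((hright.comp tendsto_inv_nhdsGT_zero).inv₀ hy')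

theorem hPlus_Fstar (hF : HPlus F ∨ HMinus F) : HPlus (Fstar F) := by
  rcases hF with hP | hM
  · rwa [Fstar, if_pos hP]
  · rw [Fstar, if_neg hM.not_hPlus]
    exact hM.hPlus_inv

theorem sSup_setOf_le_lt_iff {α β : Type*} [ConditionallyCompleteLinearOrder α]
    [TopologicalSpace α] [OrderTopology α] [LinearOrder β] [TopologicalSpace β]
    [ClosedIciTopology β] {g : α → β} {c : β} (hg : Continuous g) (hanti : Antitone g)
    (hne : ∃ z, c ≤ g z) (hlt : ∃ z, g z < c) (u : α) :
    sSup {z | c ≤ g z} < u ↔ g u < c := by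
  obtain ⟨z₀, hz₀⟩ := hlt
  have hbdd : BddAbove {z | c ≤ g z} := ⟨z₀, fun z hz =>
    le_of_not_gt fun h => (hz.trans (hanti h.le)).not_gt hz₀⟩
  have hmem : c ≤ g (sSup {z | c ≤ g z}) :=
    (isClosed_Ici.preimage hg).csSup_mem hne hbdd
  constructor
  · exact fun h => lt_of_not_ge fun hu => (le_csSup hbdd hu).not_gt h
  · exact fun h => lt_of_not_ge fun hu => (hmem.trans (hanti hu)).not_gt h

theorem TF_lt_iff (hF : HPlus (Fstar F)) {t : ℝ} (ht : 0 < t) (u : ℝ) :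
    TF F t < u ↔ Fstar F (exp (-t)) (exp (-u)) < 1 := by
  obtain ⟨hc, -, hmono, -, hmax, hlim⟩ := hF
  set g : ℝ → ℝ := fun z => Fstar F (exp (-t)) (exp (-z))
  have hg : Continuous g :=
    hc.comp_continuous (f := fun z : ℝ => (exp (-t), exp (-z))) (by fun_prop)
      fun z => ⟨exp_pos _, exp_pos _⟩
  have hanti : Antitone g := fun z z' h =>
    hmono _ _ _ _ (exp_pos _) (exp_pos _) le_rfl (exp_le_exp.2 (neg_le_neg h))
  have hg0 : 1 ≤ g 0 :=
    (le_max_of_le_right (by simp)).trans (hmax _ _ (exp_pos _) (exp_pos _))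
  have hexp : Tendsto (fun z : ℝ => exp (-z)) atTop (nhdsWithin 0 (Ioi 0)) :=
    tendsto_nhdsWithin_of_tendsto_nhds_of_eventually_within _
      tendsto_exp_neg_atTop_nhds_zero (Eventually.of_forall fun z => exp_pos _)
  have hlim_g : Tendsto g atTop (nhds (exp (-t))) := (hlim _ (exp_pos _)).2.comp hexp
  have hlt : ∃ z, g z < 1 :=
    (hlim_g.eventually_lt_const (Real.exp_lt_one_iff.2 (neg_lt_zero.2 ht))).exists
  exact sSup_setOf_le_lt_iff hg hanti ⟨0, hg0⟩ hlt u

/-- For F ∈ 𝓗₊ ∪ 𝓗₋ and t, u > 0: T_F(t) < u iff T_{F^#}(u) < t, where F^#(x,y) = F(y,x). -/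
theorem stmt4 (F : ℝ → ℝ → ℝ) (hF : HPlus F ∨ HMinus F) (t u : ℝ)
    (ht : 0 < t) (hu : 0 < u) :
    TF F t < u ↔ TF (Fsharp F) u < t := by
  have hstar : HPlus (Fstar F) := hPlus_Fstar hF
  have hstar_sharp : HPlus (Fstar (Fsharp F)) := Fstar_sharp F ▸ hstar.sharp
  rw [TF_lt_iff hstar ht, TF_lt_iff hstar_sharp hu, Fstar_sharp]
  rfl
end

section
/- Let F ∈ 𝓗₊ ∪ 𝓗₋ and r_F := log F*(1,1). Then T_F^-(r_F) ≤ r_F ≤ T_F(r_F); moreover for all t > r_F one has T_F(t) ≤ r_F (hence T_F(t) < t), and for all 0 < u < r_F one has T_F(u) ≥ r_F (hence T_F(u) > u). -/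
/-! `F*` turns the whole problem into one about an element of `𝓗₊`. On the diagonal, homogeneity
gives `F*(e^{-s}, e^{-s}) = e^{r_F - s}`, so `r_F` is exactly where the diagonal crosses the level
`1`. Monotonicity of `F*` then places the level set `{F*(e^{-t}, e^{-z}) = 1}` on the correct side
of `r_F`, and the limit `F*(x, y) → x` as `y → 0⁺` makes the superlevel sets bounded above. -/


open MeasureTheory Filter Set Real
open scoped Classical

theorem HMinus.hPlus_inv_inv {F : ℝ → ℝ → ℝ} (hF : HMinus F) :
    HPlus (fun x y => (F x⁻¹ y⁻¹)⁻¹) := by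
  obtain ⟨hcont, hpos, hmono, hhom, hmin, hlim⟩ := hF
  have hpos' : ∀ x y, 0 < x → 0 < y → 0 < F x⁻¹ y⁻¹ := fun x y hx hy =>
    hpos _ _ (inv_pos.2 hx) (inv_pos.2 hy)
  refine ⟨?_, fun x y hx hy => inv_pos.2 (hpos' x y hx hy), ?_, ?_, ?_, ?_⟩
  · have hinv : ContinuousOn (fun p : ℝ × ℝ => (p.1⁻¹, p.2⁻¹)) {p | 0 < p.1 ∧ 0 < p.2} :=
      (continuousOn_fst.inv₀ fun p hp => hp.1.ne').prodMk
        (continuousOn_snd.inv₀ fun p hp => hp.2.ne')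
    exact (hcont.comp hinv fun p hp => ⟨inv_pos.2 hp.1, inv_pos.2 hp.2⟩).inv₀
      fun p hp => (hpos' _ _ hp.1 hp.2).ne'
  · intro x x' y y' hx hy hxx hyy
    have hx' := hx.trans_le hxx
    have hy' := hy.trans_le hyy
    exact inv_anti₀ (hpos' _ _ hx' hy')
      (hmono _ _ _ _ (inv_pos.2 hx') (inv_pos.2 hy') (inv_anti₀ hx hxx) (inv_anti₀ hy hyy))
  · intro a x y ha hx hy
    simp only [mul_inv]
    rw [hhom _ _ _ (inv_pos.2 ha) (inv_pos.2 hx) (inv_pos.2 hy), mul_inv, inv_inv]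
  · intro x y hx hy
    have hle := hmin _ _ (inv_pos.2 hx) (inv_pos.2 hy)
    exact max_le ((le_inv_comm₀ hx (hpos' x y hx hy)).2 (hle.trans (min_le_left _ _)))
      ((le_inv_comm₀ hy (hpos' x y hx hy)).2 (hle.trans (min_le_right _ _)))
  · intro y hy
    obtain ⟨hleft, hright⟩ := hlim y⁻¹ (inv_pos.2 hy)
    constructor
    · simpa using (hleft.comp tendsto_inv_nhdsGT_zero).inv₀ (inv_pos.2 hy).ne'
    · simpa using (hright.comp tendsto_inv_nhdsGT_zero).inv₀ (inv_pos.2 hy).ne'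

theorem hPlus_fstar {F : ℝ → ℝ → ℝ} (hF : HPlus F ∨ HMinus F) : HPlus (Fstar F) := by
  by_cases h : HPlus F
  · rwa [Fstar, if_pos h]
  · rw [Fstar, if_neg h]
    exact (hF.resolve_left h).hPlus_inv_inv

theorem HPlus.max_le {G : ℝ → ℝ → ℝ} (hG : HPlus G) {x y : ℝ} (hx : 0 < x) (hy : 0 < y) :
    max x y ≤ G x y :=
  hG.2.2.2.2.1 x y hx hy

theorem HPlus.mono {G : ℝ → ℝ → ℝ} (hG : HPlus G) {x x' y y' : ℝ} (hx : 0 < x) (hy : 0 < y)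
    (hxx : x ≤ x') (hyy : y ≤ y') : G x y ≤ G x' y' :=
  hG.2.2.1 x x' y y' hx hy hxx hyy

theorem HPlus.map_mul {G : ℝ → ℝ → ℝ} (hG : HPlus G) {a x y : ℝ} (ha : 0 < a) (hx : 0 < x)
    (hy : 0 < y) : G (a * x) (a * y) = a * G x y :=
  hG.2.2.2.1 a x y ha hx hy

theorem HPlus.tendsto_right {G : ℝ → ℝ → ℝ} (hG : HPlus G) {x : ℝ} (hx : 0 < x) :
    Tendsto (G x) (nhdsWithin 0 (Ioi 0)) (nhds x) :=
  (hG.2.2.2.2.2 x hx).2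

section Threshold

variable {F : ℝ → ℝ → ℝ} (hF : HPlus (Fstar F))
include hF

theorem one_le_fstar_one_one : 1 ≤ Fstar F 1 1 := by
  simpa using hF.max_le one_pos one_pos

theorem rF_nonneg : 0 ≤ rF F :=
  Real.log_nonneg (one_le_fstar_one_one hF)

theorem fstar_exp_neg_diag (s : ℝ) :
    Fstar F (exp (-s)) (exp (-s)) = exp (rF F - s) := by
  have hhom := hF.map_mul (exp_pos (-s)) one_pos one_pos
  rw [mul_one] at hhom
  rw [hhom, rF, sub_eq_neg_add, exp_add,
    exp_log (one_pos.trans_le (one_le_fstar_one_one hF))]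

theorem fstar_exp_neg_le {t z t' z' : ℝ} (ht : t' ≤ t) (hz : z' ≤ z) :
    Fstar F (exp (-t)) (exp (-z)) ≤ Fstar F (exp (-t')) (exp (-z')) :=
  hF.mono (exp_pos _) (exp_pos _) (exp_le_exp.2 (neg_le_neg ht))
    (exp_le_exp.2 (neg_le_neg hz))

theorem bddAbove_superlevel {t : ℝ} (ht : 0 < t) :
    BddAbove {z : ℝ | 1 ≤ Fstar F (exp (-t)) (exp (-z))} := by
  have hlim : Tendsto (fun z => Fstar F (exp (-t)) (exp (-z))) atTop (nhds (exp (-t))) :=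
    (hF.tendsto_right (exp_pos _)).comp
      (tendsto_exp_atBot_nhdsGT.comp tendsto_neg_atTop_atBot)
  obtain ⟨N, hN⟩ :=
    eventually_atTop.1 (hlim.eventually_lt_const (exp_lt_one_iff.2 (neg_neg_of_pos ht)))
  exact ⟨N, fun z hz => le_of_not_gt fun hzN => (hN z hzN.le).not_ge hz⟩

theorem bddBelow_sublevel (t : ℝ) :
    BddBelow {z : ℝ | Fstar F (exp (-t)) (exp (-z)) ≤ 1} := by
  refine ⟨0, fun z hz => ?_⟩
  have h : exp (-z) ≤ 1 :=
    (le_max_right _ _).trans ((hF.max_le (exp_pos _) (exp_pos _)).trans hz)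
  linarith [exp_le_one_iff.1 h]

theorem TFminus_rF_le : TFminus F (rF F) ≤ rF F :=
  csInf_le (bddBelow_sublevel hF _) (by simp [fstar_exp_neg_diag hF])

theorem rF_le_TF {u : ℝ} (hu : 0 < u) (hur : u ≤ rF F) : rF F ≤ TF F u := by
  refine le_csSup (bddAbove_superlevel hF hu) ?_
  calc (1 : ℝ) = Fstar F (exp (-rF F)) (exp (-rF F)) := by simp [fstar_exp_neg_diag hF]
    _ ≤ Fstar F (exp (-u)) (exp (-rF F)) := fstar_exp_neg_le hF hur le_rfl

theorem rF_le_TF_rF : rF F ≤ TF F (rF F) := by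
  rcases (rF_nonneg hF).lt_or_eq with hr | hr
  · exact rF_le_TF hF hr le_rfl
  · -- at `t = 0` the superlevel set is all of `ℝ`, whose `sSup` is the junk value `0`
    have huniv : {z : ℝ | 1 ≤ Fstar F (exp (-0)) (exp (-z))} = univ :=
      eq_univ_of_forall fun z => by
        simpa using (le_max_left _ _).trans (hF.max_le one_pos (exp_pos (-z)))
    rw [TF, ← hr, huniv, Real.sSup_univ]

theorem TF_le_rF {t : ℝ} (ht : rF F < t) : TF F t ≤ rF F := by
  refine Real.sSup_le (fun z hz => le_of_not_gt fun hz' => ?_) (rF_nonneg hF)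
  have hm : rF F < min t z := lt_min ht hz'
  have : (1 : ℝ) ≤ exp (rF F - min t z) :=
    calc (1 : ℝ) ≤ Fstar F (exp (-t)) (exp (-z)) := hz
      _ ≤ Fstar F (exp (-min t z)) (exp (-min t z)) :=
        fstar_exp_neg_le hF (min_le_left _ _) (min_le_right _ _)
      _ = exp (rF F - min t z) := fstar_exp_neg_diag hF _
  linarith [one_le_exp_iff.1 this]

end Threshold

/-- T_F^-(r_F) ≤ r_F ≤ T_F(r_F); for t > r_F, T_F(t) ≤ r_F (hence T_F(t) < t);
for 0 < u < r_F, T_F(u) ≥ r_F (hence T_F(u) > u). -/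
theorem stmt6 (F : ℝ → ℝ → ℝ) (hF : HPlus F ∨ HMinus F) :
    TFminus F (rF F) ≤ rF F ∧ rF F ≤ TF F (rF F) ∧
    (∀ t : ℝ, rF F < t → TF F t ≤ rF F ∧ TF F t < t) ∧
    (∀ u : ℝ, 0 < u → u < rF F → rF F ≤ TF F u ∧ u < TF F u) := by
  have hF' := hPlus_fstar hF
  refine ⟨TFminus_rF_le hF', rF_le_TF_rF hF', fun t ht => ?_, fun u hu hur => ?_⟩
  · have h := TF_le_rF hF' ht
    exact ⟨h, h.trans_lt ht⟩
  · have h := rF_le_TF hF' hu hur.le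
    exact ⟨h, hur.trans_le h⟩
end

section
/- Let ψ be a probability density on ℝ with distribution function Ψ, and let Y, Ŷ be independent random variables with density ψ. Then for F ∈ 𝓗₊ and all v ∈ ℝ: P(log F(e^Y, e^{Ŷ}) < v) = Ψ(v)² − Λ_{ψ,F}(v), where Λ_{ψ,F}(v) := ∫₀^∞ ψ(v−t)[Ψ(v) − Ψ(v − T_F(t))] dt. -/
open MeasureTheory Filter Set Real
open scoped Classical

/-- Λ_{ψ,F}(v) for F ∈ 𝓗₊, with distribution function Ψ of ψ. -/
noncomputable def LamPlus (ψ Ψ : ℝ → ℝ) (F : ℝ → ℝ → ℝ) (v : ℝ) : ℝ :=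
  ∫ t in Set.Ioi (0 : ℝ), ψ (v - t) * (Ψ v - Ψ (v - TF F t))

section AuxStmt14
variable {F : ℝ → ℝ → ℝ}

lemma Fstar_eq (hF : HPlus F) : Fstar F = F := if_pos hF

lemma TF_facts (hF : HPlus F) {t : ℝ} (ht : 0 < t) :
    BddAbove {z : ℝ | 1 ≤ F (Real.exp (-t)) (Real.exp (-z))} ∧ 0 ≤ TF F t ∧
    (∀ s : ℝ, F (Real.exp (-t)) (Real.exp (-s)) < 1 ↔ TF F t < s) := by
  obtain ⟨hcont, hpos, hmono, hhom, hmax, hlim⟩ := hF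
  have hF' : HPlus F := ⟨hcont, hpos, hmono, hhom, hmax, hlim⟩
  set g : ℝ → ℝ := fun z => F (Real.exp (-t)) (Real.exp (-z)) with hgdef
  have hTF : TF F t = sSup {z : ℝ | 1 ≤ g z} := by
    rw [TF, Fstar_eq hF']
  have hganti : ∀ z z' : ℝ, z ≤ z' → g z' ≤ g z := by
    intro z z' h
    exact hmono _ _ _ _ (exp_pos _) (exp_pos _) le_rfl (exp_le_exp.mpr (by linarith))
  have hopen : IsOpen {p : ℝ × ℝ | 0 < p.1 ∧ 0 < p.2} := by
    have : {p : ℝ × ℝ | 0 < p.1 ∧ 0 < p.2} = {p : ℝ × ℝ | 0 < p.1} ∩ {p : ℝ × ℝ | 0 < p.2} := rfl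
    rw [this]
    exact (isOpen_lt continuous_const continuous_fst).inter
      (isOpen_lt continuous_const continuous_snd)
  have hgc : Continuous g := by
    exact hcont.comp_continuous
      (continuous_const.prodMk (Real.continuous_exp.comp continuous_neg))
      (fun z => ⟨exp_pos _, exp_pos _⟩)
  have hmem0 : (0:ℝ) ∈ {z : ℝ | 1 ≤ g z} := by
    show (1:ℝ) ≤ F (Real.exp (-t)) (Real.exp (-(0:ℝ)))
    rw [neg_zero, Real.exp_zero]
    exact le_trans (le_max_right _ _) (hmax _ _ (exp_pos _) one_pos)
  have hne : Set.Nonempty {z : ℝ | 1 ≤ g z} := ⟨0, hmem0⟩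
  have hbdd : BddAbove {z : ℝ | 1 ≤ g z} := by
    have hlt1 : Real.exp (-t) < 1 := exp_lt_one_iff.mpr (by linarith)
    have hev : ∀ᶠ x in nhdsWithin 0 (Set.Ioi 0), F (Real.exp (-t)) x < 1 :=
      ((hlim (Real.exp (-t)) (exp_pos _)).2).eventually_lt_const hlt1
    obtain ⟨x₀, hx₀lt, hx₀pos⟩ := (hev.and (eventually_mem_nhdsWithin)).exists
    refine ⟨-Real.log x₀, fun w hw => ?_⟩
    by_contra hc
    push_neg at hc
    have : g w ≤ g (-Real.log x₀) := hganti _ _ hc.le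
    have hgx : g (-Real.log x₀) < 1 := by
      simp only [hgdef, neg_neg, Real.exp_log hx₀pos]
      exact hx₀lt
    exact absurd (le_trans hw this) (not_le.mpr hgx)
  have hclosed : IsClosed {z : ℝ | 1 ≤ g z} := isClosed_le continuous_const hgc
  have hTmem : TF F t ∈ {z : ℝ | 1 ≤ g z} := by
    rw [hTF]; exact hclosed.csSup_mem hne hbdd
  refine ⟨hbdd, ?_, ?_⟩
  · rw [hTF]; exact le_csSup hbdd hmem0
  · intro s
    constructor
    · intro h
      by_contra hc
      push_neg at hc
      have := hganti _ _ hc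
      exact absurd (le_trans hTmem this) (not_le.mpr h)
    · intro h
      by_contra hc
      push_neg at hc
      have : s ≤ TF F t := by rw [hTF]; exact le_csSup hbdd hc
      linarith

lemma event_iff (hF : HPlus F) (v y z : ℝ) :
    F (Real.exp y) (Real.exp z) < Real.exp v ↔ (y < v ∧ z < v - TF F (v - y)) := by
  obtain ⟨hcont, hpos, hmono, hhom, hmax, hlim⟩ := hF
  have hF' : HPlus F := ⟨hcont, hpos, hmono, hhom, hmax, hlim⟩
  constructor
  · intro h
    have hy : y < v := by
      have h1 := hmax (Real.exp y) (Real.exp z) (exp_pos _) (exp_pos _)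
      have : Real.exp y < Real.exp v := lt_of_le_of_lt (le_trans (le_max_left _ _) h1) h
      exact exp_lt_exp.mp this
    have ht : 0 < v - y := sub_pos.mpr hy
    have hkey : F (Real.exp (-(v - y))) (Real.exp (-(v - z))) < 1 := by
      have hh := hhom (Real.exp (-v)) (Real.exp y) (Real.exp z) (exp_pos _) (exp_pos _) (exp_pos _)
      rw [← Real.exp_add, ← Real.exp_add] at hh
      have e1 : -v + y = -(v - y) := by ring
      have e2 : -v + z = -(v - z) := by ring
      rw [e1, e2] at hh
      rw [hh]
      calc Real.exp (-v) * F (Real.exp y) (Real.exp z)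
          < Real.exp (-v) * Real.exp v := by
            exact (mul_lt_mul_iff_right₀ (exp_pos _)).mpr h
        _ = 1 := by rw [← Real.exp_add]; simp
    have := ((TF_facts hF' ht).2.2 (v - z)).mp hkey
    exact ⟨hy, by linarith⟩
  · rintro ⟨hy, hz⟩
    have ht : 0 < v - y := sub_pos.mpr hy
    have hkey : F (Real.exp (-(v - y))) (Real.exp (-(v - z))) < 1 :=
      ((TF_facts hF' ht).2.2 (v - z)).mpr (by linarith)
    have hh := hhom (Real.exp v) (Real.exp (-(v - y))) (Real.exp (-(v - z)))
      (exp_pos _) (exp_pos _) (exp_pos _)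
    rw [← Real.exp_add, ← Real.exp_add] at hh
    have e1 : v + -(v - y) = y := by ring
    have e2 : v + -(v - z) = z := by ring
    rw [e1, e2] at hh
    rw [hh]
    calc Real.exp v * F (Real.exp (-(v - y))) (Real.exp (-(v - z)))
        < Real.exp v * 1 := (mul_lt_mul_iff_right₀ (exp_pos _)).mpr hkey
      _ = Real.exp v := mul_one _

lemma TF_anti (hF : HPlus F) {t t' : ℝ} (ht : 0 < t) (htt' : t ≤ t') : TF F t' ≤ TF F t := by
  obtain ⟨hcont, hpos, hmono, hhom, hmax, hlim⟩ := hF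
  have hF' : HPlus F := ⟨hcont, hpos, hmono, hhom, hmax, hlim⟩
  have ht' : 0 < t' := lt_of_lt_of_le ht htt'
  have hbdd := (TF_facts hF' ht).1
  have h0 := (TF_facts hF' ht').2.1
  rw [TF, TF, Fstar_eq hF']
  refine csSup_le_csSup hbdd ?_ ?_
  · refine ⟨0, ?_⟩
    show (1:ℝ) ≤ F (Real.exp (-t')) (Real.exp (-(0:ℝ)))
    rw [neg_zero, Real.exp_zero]
    exact le_trans (le_max_right _ _) (hmax _ _ (exp_pos _) one_pos)
  · intro z hz
    exact le_trans hz (hmono _ _ _ _ (exp_pos _) (exp_pos _)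
      (exp_le_exp.mpr (by linarith)) le_rfl)

end AuxStmt14

/-- For Y, Ŷ i.i.d. with density ψ and F ∈ 𝓗₊:
P(log F(e^Y, e^Ŷ) < v) = Ψ(v)² − Λ_{ψ,F}(v). -/
theorem stmt14 {Ω : Type*} [MeasurableSpace Ω] (μ : Measure Ω) [IsProbabilityMeasure μ]
    (ψ : ℝ → ℝ) (hψm : Measurable ψ) (hψ0 : ∀ x, 0 ≤ ψ x) (hψ1 : ∫ x, ψ x = 1)
    (Y Yh : Ω → ℝ) (hYm : Measurable Y) (hYhm : Measurable Yh)
    (hind : ProbabilityTheory.IndepFun Y Yh μ)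
    (hYlaw : μ.map Y = volume.withDensity fun x => ENNReal.ofReal (ψ x))
    (hYhlaw : μ.map Yh = volume.withDensity fun x => ENNReal.ofReal (ψ x))
    (F : ℝ → ℝ → ℝ) (hF : HPlus F) (v : ℝ) :
    (μ {ω | Real.log (F (Real.exp (Y ω)) (Real.exp (Yh ω))) < v}).toReal =
      (∫ x in Set.Iic v, ψ x) ^ 2 -
        LamPlus ψ (fun w => ∫ x in Set.Iic w, ψ x) F v := by
  have hF' := hF
  obtain ⟨hcont, hpos, hmono, hhom, hmax, hlim⟩ := hF
  set Ψ : ℝ → ℝ := fun w => ∫ x in Set.Iic w, ψ x with hΨdef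
  show _ = Ψ v ^ 2 - LamPlus ψ Ψ F v
  have hψint : Integrable ψ := by
    by_contra h
    rw [integral_undef h] at hψ1
    norm_num at hψ1
  have hΨmono : Monotone Ψ := by
    intro a b hab
    exact setIntegral_mono_set hψint.integrableOn (ae_of_all _ fun x => hψ0 x)
      (HasSubset.Subset.eventuallyLE (Iic_subset_Iic.mpr hab))
  have hΨ0 : ∀ a, 0 ≤ Ψ a := fun a => setIntegral_nonneg measurableSet_Iic fun x _ => hψ0 x
  have hΨ1 : ∀ a, Ψ a ≤ 1 := by
    intro a
    rw [← hψ1]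
    exact setIntegral_le_integral hψint (ae_of_all _ fun x => hψ0 x)
  -- measurable version of TF
  set T' : ℝ → ℝ := fun t => TF F (Real.exp (Real.log t)) with hT'def
  have hT'anti : Antitone fun a : ℝ => TF F (Real.exp a) := fun a b hab =>
    TF_anti hF' (exp_pos a) (exp_le_exp.mpr hab)
  have hT'meas : Measurable T' := hT'anti.measurable.comp Real.measurable_log
  have hT'eq : ∀ t : ℝ, 0 < t → T' t = TF F t := fun t ht => by
    simp only [hT'def, Real.exp_log ht]
  set ν : Measure ℝ := volume.withDensity fun x => ENNReal.ofReal (ψ x) with hνdef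
  haveI hνprob : IsProbabilityMeasure ν := by
    constructor
    rw [hνdef, withDensity_apply _ MeasurableSet.univ, Measure.restrict_univ,
      ← ofReal_integral_eq_lintegral_ofReal hψint (ae_of_all _ fun x => hψ0 x), hψ1,
      ENNReal.ofReal_one]
  have hνIio : ∀ a : ℝ, ν (Iio a) = ENNReal.ofReal (Ψ a) := by
    intro a
    rw [hνdef, withDensity_apply _ measurableSet_Iio,
      ← ofReal_integral_eq_lintegral_ofReal hψint.integrableOn (ae_of_all _ fun x => hψ0 x)]
    congr 1
    exact integral_Iic_eq_integral_Iio.symm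
  set g : ℝ → ℝ := fun y => ψ y * Ψ (v - T' (v - y)) with hgdef
  have hΨmeas : Measurable Ψ := hΨmono.measurable
  have hm1 : Measurable fun y : ℝ => v - y := measurable_id.const_sub v
  have hm2 : Measurable fun y : ℝ => T' (v - y) := hT'meas.comp hm1
  have hm3 : Measurable fun y : ℝ => v - T' (v - y) := hm2.const_sub v
  have hm4 : Measurable fun y : ℝ => Ψ (v - T' (v - y)) := hΨmeas.comp hm3
  have hΦm : Measurable fun y : ℝ => ENNReal.ofReal (Ψ (v - T' (v - y))) := hm4.ennreal_ofReal
  have hgm : Measurable g := hψm.mul hm4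
  have hgnn : ∀ y, 0 ≤ g y := fun y => mul_nonneg (hψ0 y) (hΨ0 _)
  have hgint : Integrable g := by
    refine Integrable.mono' hψint hgm.aestronglyMeasurable (ae_of_all _ fun y => ?_)
    rw [Real.norm_eq_abs, abs_of_nonneg (hgnn y)]
    calc g y ≤ ψ y * 1 := mul_le_mul_of_nonneg_left (hΨ1 _) (hψ0 y)
      _ = ψ y := mul_one _
  -- the event
  set B : Set (ℝ × ℝ) := {p : ℝ × ℝ | F (Real.exp p.1) (Real.exp p.2) < Real.exp v} with hBdef
  have hBopen : IsOpen B := by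
    have hc : Continuous fun p : ℝ × ℝ => F (Real.exp p.1) (Real.exp p.2) :=
      hcont.comp_continuous
        ((Real.continuous_exp.comp continuous_fst).prodMk
          (Real.continuous_exp.comp continuous_snd))
        (fun p => ⟨exp_pos _, exp_pos _⟩)
    exact isOpen_lt hc continuous_const
  have hEpre : {ω | Real.log (F (Real.exp (Y ω)) (Real.exp (Yh ω))) < v}
      = (fun ω => (Y ω, Yh ω)) ⁻¹' B := by
    ext ω
    simp only [hBdef, Set.mem_setOf_eq, Set.mem_preimage]
    exact Real.log_lt_iff_lt_exp (hpos _ _ (exp_pos _) (exp_pos _))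
  have hmapYY : μ.map (fun ω => (Y ω, Yh ω)) = ν.prod ν := by
    rw [(ProbabilityTheory.indepFun_iff_map_prod_eq_prod_map_map hYm.aemeasurable
      hYhm.aemeasurable).mp hind, hYlaw, hYhlaw]
  have hμE : μ {ω | Real.log (F (Real.exp (Y ω)) (Real.exp (Yh ω))) < v} = (ν.prod ν) B := by
    rw [hEpre, ← Measure.map_apply (hYm.prodMk hYhm) hBopen.measurableSet, hmapYY]
  -- slices
  have hslice : ∀ y : ℝ, ν (Prod.mk y ⁻¹' B)
      = (Iio v).indicator (fun y => ENNReal.ofReal (Ψ (v - T' (v - y)))) y := by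
    intro y
    by_cases hy : y < v
    · have hs : Prod.mk y ⁻¹' B = Iio (v - TF F (v - y)) := by
        ext z
        simp only [Set.mem_preimage, hBdef, Set.mem_setOf_eq, Set.mem_Iio]
        rw [event_iff hF' v y z]
        exact ⟨fun h => h.2, fun h => ⟨hy, h⟩⟩
      rw [hs, hνIio, Set.indicator_of_mem (Set.mem_Iio.mpr hy), hT'eq _ (sub_pos.mpr hy)]
    · have hs : Prod.mk y ⁻¹' B = ∅ := by
        ext z
        simp only [Set.mem_preimage, hBdef, Set.mem_setOf_eq, Set.mem_empty_iff_false, iff_false]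
        intro h
        exact hy ((event_iff hF' v y z).mp h).1
      rw [hs, measure_empty,
        Set.indicator_of_notMem (fun hcon => hy (Set.mem_Iio.mp hcon))]
  have hprodB : (ν.prod ν) B = ENNReal.ofReal (∫ y in Iio v, g y) := by
    rw [Measure.prod_apply hBopen.measurableSet]
    calc ∫⁻ y, ν (Prod.mk y ⁻¹' B) ∂ν
        = ∫⁻ y, (Iio v).indicator (fun y => ENNReal.ofReal (Ψ (v - T' (v - y)))) y ∂ν :=
          lintegral_congr hslice
      _ = ∫⁻ y in Iio v, ENNReal.ofReal (Ψ (v - T' (v - y))) ∂ν :=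
          lintegral_indicator measurableSet_Iio _
      _ = ∫⁻ y in Iio v, ENNReal.ofReal (ψ y) * ENNReal.ofReal (Ψ (v - T' (v - y))) ∂volume := by
          rw [hνdef, restrict_withDensity measurableSet_Iio,
            lintegral_withDensity_eq_lintegral_mul _ hψm.ennreal_ofReal hΦm]
          rfl
      _ = ∫⁻ y in Iio v, ENNReal.ofReal (g y) ∂volume := by
          refine lintegral_congr fun y => ?_
          rw [hgdef, ENNReal.ofReal_mul (hψ0 y)]
      _ = ENNReal.ofReal (∫ y in Iio v, g y) :=
          (ofReal_integral_eq_lintegral_ofReal hgint.integrableOn (ae_of_all _ hgnn)).symm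
  have hLHS : (μ {ω | Real.log (F (Real.exp (Y ω)) (Real.exp (Yh ω))) < v}).toReal
      = ∫ y in Iio v, g y := by
    rw [hμE, hprodB,
      ENNReal.toReal_ofReal (setIntegral_nonneg measurableSet_Iio fun y _ => hgnn y)]
  -- RHS computation
  have hΨv : ∫ y in Iio v, ψ y = Ψ v := integral_Iic_eq_integral_Iio.symm
  have hint1 : IntegrableOn (fun y => ψ y * Ψ v) (Iio v) := (hψint.mul_const _).integrableOn
  have hLam : LamPlus ψ Ψ F v = ∫ y in Iio v, ψ y * (Ψ v - Ψ (v - T' (v - y))) := by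
    rw [LamPlus]
    have h1 : Set.EqOn (fun t => ψ (v - t) * (Ψ v - Ψ (v - TF F t)))
        (fun t => (fun y => ψ y * (Ψ v - Ψ (v - T' (v - y)))) (v - t)) (Ioi 0) := by
      intro t ht
      simp only [sub_sub_cancel]
      rw [hT'eq t ht]
    rw [setIntegral_congr_fun measurableSet_Ioi h1]
    have hmp : MeasurePreserving (fun t : ℝ => v - t) volume volume :=
      Measure.measurePreserving_sub_left volume v
    have hemb : MeasurableEmbedding (fun t : ℝ => v - t) :=
      (MeasurableEquiv.subLeft v).measurableEmbedding
    have hpre : (fun t : ℝ => v - t) ⁻¹' (Iio v) = Ioi 0 := by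
      ext t
      simp only [Set.mem_preimage, Set.mem_Iio, Set.mem_Ioi]
      constructor <;> intro h <;> linarith
    rw [← hpre]
    exact hmp.setIntegral_preimage_emb hemb (fun y => ψ y * (Ψ v - Ψ (v - T' (v - y)))) (Iio v)
  have hsplit : ∫ y in Iio v, ψ y * (Ψ v - Ψ (v - T' (v - y)))
      = (∫ y in Iio v, ψ y * Ψ v) - ∫ y in Iio v, g y := by
    rw [← integral_sub hint1 hgint.integrableOn]
    refine setIntegral_congr_fun measurableSet_Iio fun y _ => ?_
    simp only [hgdef, mul_sub]
  have hΨsq : ∫ y in Iio v, ψ y * Ψ v = Ψ v ^ 2 := by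
    rw [integral_mul_const, hΨv, sq]
  rw [hLHS, hLam, hsplit, hΨsq]
  ring
end
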